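/- Let z ~ N(0, σ²) be a Gaussian random variable and φ(z) = max(-ζ, min(z, ζ)) with ζ > 0. Then E[φ(z)²] = ζ² + (σ² - ζ²)·erf(ζ/(√2·σ)) - (2ζσ/√(2π))·e^{-ζ²/(2σ²)}. -/

import Mathlib

open MeasureTheory ProbabilityTheory

/-- The Gauss error function. -/
noncomputable def erf (x : ℝ) : ℝ := (2 / Real.sqrt Real.pi) * ∫ t in (0:ℝ)..x, Real.exp (-t ^ 2)

/-- The symmetric saturation function at level ζ. -/
noncomputable def sat (ζ x : ℝ) : ℝ := max (-ζ) (min x ζ)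

/-! Off `(-ζ, ζ]` the saturated value squares to `ζ²`, so
`E[φ(z)²] = ζ² + ∫_{-ζ}^{ζ} (x² - ζ²) p(x) dx` with `p` the density of `z`.
Split `x² - ζ² = (x² - σ²) + (σ² - ζ²)`: the first part integrates in closed form because
`(x² - σ²) p(x) = -σ² (x p(x))'`, and the second gives `σ² - ζ²` times the Gaussian mass
of `[-ζ, ζ]`, which is `erf (ζ / (√2 σ))`. -/

open Real Set
open scoped NNReal

lemma sat_of_mem_Icc {ζ x : ℝ} (hx : x ∈ Icc (-ζ) ζ) : sat ζ x = x := by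
  rw [sat, min_eq_left hx.2, max_eq_right hx.1]

lemma sq_sat_of_notMem_Ioo {ζ x : ℝ} (hx : x ∉ Ioo (-ζ) ζ) : sat ζ x ^ 2 = ζ ^ 2 := by
  rw [mem_Ioo, not_and_or, not_lt, not_lt] at hx
  rcases hx with hx | hx
  · rw [sat, max_eq_left ((min_le_left x ζ).trans hx), neg_sq]
  · rw [sat, min_eq_right hx, max_comm, ← abs_eq_max_neg, sq_abs]

lemma sq_sat_le (ζ x : ℝ) : sat ζ x ^ 2 ≤ ζ ^ 2 :=
  sq_le_sq.2 <| abs_le.2 ⟨(neg_le_neg (le_abs_self ζ)).trans (le_max_left _ _),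
    max_le (neg_le_abs ζ) ((min_le_right x ζ).trans (le_abs_self ζ))⟩

lemma continuous_sat (ζ : ℝ) : Continuous (sat ζ) := by
  unfold sat; fun_prop

lemma integral_eq_const_add_setIntegral_sub {α : Type*} [MeasurableSpace α] {μ : Measure α}
    [IsProbabilityMeasure μ] {g : α → ℝ} {s : Set α} {c : ℝ} (hg : Integrable g μ)
    (hgs : ∀ x ∉ s, g x = c) :
    ∫ x, g x ∂μ = c + ∫ x in s, (g x - c) ∂μ := by
  rw [setIntegral_eq_integral_of_forall_compl_eq_zero fun x hx ↦ sub_eq_zero.2 (hgs x hx),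
    integral_sub hg (integrable_const c)]
  simp

lemma setIntegral_gaussianReal_eq_integral_smul {E : Type*} [NormedAddCommGroup E]
    [NormedSpace ℝ E] {μ : ℝ} {v : ℝ≥0} {f : ℝ → E} {s : Set ℝ} (hv : v ≠ 0)
    (hs : MeasurableSet s) :
    ∫ x in s, f x ∂gaussianReal μ v = ∫ x in s, gaussianPDFReal μ v x • f x := by
  simp_rw [← integral_indicator hs, integral_gaussianReal_eq_integral_smul hv,
    indicator_smul_apply]

lemma hasDerivAt_gaussianPDFReal (μ : ℝ) (v : ℝ≥0) (x : ℝ) :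
    HasDerivAt (gaussianPDFReal μ v) (-((x - μ) / v) * gaussianPDFReal μ v x) x := by
  have hexponent : HasDerivAt (fun x ↦ -(x - μ) ^ 2 / (2 * v)) (-((x - μ) / v)) x :=
    ((((hasDerivAt_id' x).sub_const μ).fun_pow 2).fun_neg.div_const _).congr_deriv (by ring)
  rw [gaussianPDFReal_def]
  exact (hexponent.exp.const_mul _).congr_deriv (by ring)

@[fun_prop]
lemma continuous_gaussianPDFReal (μ : ℝ) (v : ℝ≥0) : Continuous (gaussianPDFReal μ v) := by
  rw [gaussianPDFReal_def]; fun_prop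

lemma integral_sq_sub_var_mul_gaussianPDFReal (μ : ℝ) (v : ℝ≥0) (a b : ℝ) :
    ∫ x in a..b, ((x - μ) ^ 2 - v) * gaussianPDFReal μ v x
      = v * ((a - μ) * gaussianPDFReal μ v a - (b - μ) * gaussianPDFReal μ v b) := by
  rcases eq_or_ne v 0 with rfl | hv
  · simp
  have hderiv (x : ℝ) : HasDerivAt (fun x ↦ -v * (x - μ) * gaussianPDFReal μ v x)
      (((x - μ) ^ 2 - v) * gaussianPDFReal μ v x) x :=
    ((((hasDerivAt_id' x).sub_const μ).const_mul (-(v : ℝ))).mul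
      (hasDerivAt_gaussianPDFReal μ v x)).congr_deriv (by field_simp; ring)
  rw [intervalIntegral.integral_eq_sub_of_hasDerivAt (fun x _ ↦ hderiv x)
    ((by fun_prop : Continuous _).intervalIntegrable _ _)]
  ring

lemma integral_exp_neg_sq_eq_sqrt_pi_mul_erf (a : ℝ) :
    ∫ x in -a..a, exp (-x ^ 2) = √π * erf a := by
  have hint (a b : ℝ) : IntervalIntegrable (fun x ↦ exp (-x ^ 2)) volume a b :=
    (by fun_prop : Continuous fun x : ℝ ↦ exp (-x ^ 2)).intervalIntegrable a b
  have hsymm : ∫ x in -a..0, exp (-x ^ 2) = ∫ x in 0..a, exp (-x ^ 2) := by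
    have := intervalIntegral.integral_comp_neg (a := 0) (b := a) fun x ↦ exp (-x ^ 2)
    simp only [neg_sq, neg_zero] at this
    exact this.symm
  rw [← intervalIntegral.integral_add_adjacent_intervals (hint (-a) 0) (hint 0 a), hsymm, erf]
  field_simp
  ring

lemma integral_gaussianPDFReal_eq_erf {v : ℝ≥0} (hv : v ≠ 0) (a : ℝ) :
    ∫ x in -a..a, gaussianPDFReal 0 v x = erf (a / √(2 * v)) := by
  have hc : √(2 * v) ≠ 0 := by positivity
  have hpdf (x : ℝ) :
      gaussianPDFReal 0 v x = (√(2 * π * v))⁻¹ * exp (-(x / √(2 * v)) ^ 2) := by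
    rw [gaussianPDFReal, div_pow, Real.sq_sqrt (by positivity), sub_zero, neg_div]
  simp_rw [hpdf, intervalIntegral.integral_const_mul,
    intervalIntegral.integral_comp_div (fun t ↦ exp (-t ^ 2)) hc, neg_div,
    integral_exp_neg_sq_eq_sqrt_pi_mul_erf, smul_eq_mul]
  rw [show 2 * π * v = 2 * v * π by ring, Real.sqrt_mul (by positivity)]
  field_simp

lemma integral_sq_sat_gaussianReal {v : ℝ≥0} (hv : v ≠ 0) {ζ : ℝ} (hζ : 0 ≤ ζ) :
    ∫ x, sat ζ x ^ 2 ∂gaussianReal 0 v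
      = ζ ^ 2 + (v - ζ ^ 2) * erf (ζ / √(2 * v)) - 2 * v * ζ * gaussianPDFReal 0 v ζ := by
  have hint : Integrable (fun x ↦ sat ζ x ^ 2) (gaussianReal 0 v) :=
    .of_bound ((continuous_sat ζ).pow 2).aestronglyMeasurable (ζ ^ 2)
      (.of_forall fun x ↦ by simpa using sq_sat_le ζ x)
  have hsplit (x : ℝ) : gaussianPDFReal 0 v x • (x ^ 2 - ζ ^ 2)
      = ((x - 0) ^ 2 - v) * gaussianPDFReal 0 v x + (v - ζ ^ 2) * gaussianPDFReal 0 v x := by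
    rw [smul_eq_mul]; ring
  have hpdf_neg : gaussianPDFReal 0 v (-ζ) = gaussianPDFReal 0 v ζ := by
    simp [gaussianPDFReal]
  rw [integral_eq_const_add_setIntegral_sub hint (s := Ioc (-ζ) ζ)
      fun x hx ↦ sq_sat_of_notMem_Ioo fun hx' ↦ hx (Ioo_subset_Ioc_self hx'),
    setIntegral_congr_fun measurableSet_Ioc fun x hx ↦ by
      rw [sat_of_mem_Icc (Ioc_subset_Icc_self hx)],
    setIntegral_gaussianReal_eq_integral_smul hv measurableSet_Ioc,
    ← intervalIntegral.integral_of_le (by linarith),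
    intervalIntegral.integral_congr fun x _ ↦ hsplit x,
    intervalIntegral.integral_add ((by fun_prop : Continuous _).intervalIntegrable _ _)
      ((by fun_prop : Continuous _).intervalIntegrable _ _),
    intervalIntegral.integral_const_mul, integral_sq_sub_var_mul_gaussianPDFReal,
    integral_gaussianPDFReal_eq_erf hv, hpdf_neg]
  ring

theorem expectation_sat_sq_gaussian (σ : ℝ) (hσ : 0 < σ) (ζ : ℝ) (hζ : 0 < ζ) :
    ∫ x, (sat ζ x) ^ 2 ∂(gaussianReal 0 ⟨σ ^ 2, sq_nonneg σ⟩)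
      = ζ ^ 2 + (σ ^ 2 - ζ ^ 2) * erf (ζ / (Real.sqrt 2 * σ))
        - (2 * ζ * σ / Real.sqrt (2 * Real.pi)) * Real.exp (-ζ ^ 2 / (2 * σ ^ 2)) := by
  set v : ℝ≥0 := ⟨σ ^ 2, sq_nonneg σ⟩
  have hvσ : (v : ℝ) = σ ^ 2 := rfl
  have hv : v ≠ 0 := ne_of_gt (show (0 : ℝ) < σ ^ 2 by positivity)
  have hpdf : gaussianPDFReal 0 v ζ = exp (-ζ ^ 2 / (2 * σ ^ 2)) / (√(2 * π) * σ) := by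
    rw [gaussianPDFReal, hvσ, sub_zero, Real.sqrt_mul (by positivity), Real.sqrt_sq hσ.le]
    ring
  rw [integral_sq_sat_gaussianReal hv hζ.le, hpdf, hvσ, Real.sqrt_mul zero_le_two (σ ^ 2),
    Real.sqrt_sq hσ.le]
  field_simp
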